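/- Let 𝒳, 𝒳' ⊆ Φ be almost parabolic of spherical type with R_𝒳 = R_𝒳', and set 𝒯 = 𝒳 ∖ 𝒳', 𝒱 = 𝒳 ∩ 𝒳' (so 𝒳 = 𝒯 ⊔ 𝒱 and 𝒳' = (−𝒯) ⊔ 𝒱). Let w₀ ∈ W_𝒯 be an element satisfying w₀(𝒯) = −𝒯 (for instance the longest element of the finite Coxeter group W_𝒯). Then w₀(o_𝒳) = o_{𝒳'}. -/

import Mathlib

/-!
Context: `(W, S)` is a Coxeter system for the Coxeter matrix `M` (Mathlib's convention:
the entry `0` encodes `∞`).  `V = ⊕_{s ∈ S} ℝ·α_s` is realized as `S →₀ ℝ` with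
`α_s = simpleRoot s`, equipped with the canonical symmetric bilinear form `bform M`.
The canonical faithful form-preserving representation `ρ : W →* GL(V)` and the map
`β ↦ r_β` assigning to each root its reflection are given as data, characterized by
the usual formulas (`hρ`, `hρinj`, `hρform`, `hr` below).
-/

noncomputable section

open scoped Real Pointwise

variable {S W : Type*}

/-- The simple root `α_s`. -/
def simpleRoot (s : S) : S →₀ ℝ := Finsupp.single s 1

/-- The entry `⟨α_s, α_t⟩ = -cos (π / m_{s,t})` of the canonical bilinear form,
interpreted as `-1` when `m_{s,t} = ∞` (encoded by `0`). -/
def formEntry (M : CoxeterMatrix S) (s t : S) : ℝ :=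
  if M s t = 0 then -1 else -Real.cos (Real.pi / (M s t : ℝ))

/-- The canonical symmetric bilinear form on `V = ⊕_{s ∈ S} ℝ·α_s`. -/
def bform (M : CoxeterMatrix S) : (S →₀ ℝ) →ₗ[ℝ] (S →₀ ℝ) →ₗ[ℝ] ℝ :=
  Finsupp.basisSingleOne.constr ℝ fun s =>
    Finsupp.basisSingleOne.constr ℝ fun t => formEntry M s t

variable [Group W]

/-- The root system `Φ = { w (α_s) : w ∈ W, s ∈ S }`. -/
def rootSystem (ρ : W →* ((S →₀ ℝ) ≃ₗ[ℝ] (S →₀ ℝ))) : Set (S →₀ ℝ) :=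
  Set.range fun p : W × S => ρ p.1 (simpleRoot p.2)

/-- A subset `𝒳 ⊆ V` is almost parabolic (AP): (AP1) the vectors of `𝒳` are linearly
independent, and (AP2) any two elements of `𝒳` are of the form `w (α_s)`, `w (α_t)` for a
common `w ∈ W`. -/
def IsAP (ρ : W →* ((S →₀ ℝ) ≃ₗ[ℝ] (S →₀ ℝ))) (𝒳 : Set (S →₀ ℝ)) : Prop :=
  LinearIndependent ℝ ((↑) : 𝒳 → (S →₀ ℝ)) ∧
    ∀ β ∈ 𝒳, ∀ γ ∈ 𝒳, ∃ (w : W) (s t : S),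
      ρ w (simpleRoot s) = β ∧ ρ w (simpleRoot t) = γ

/-- `g ∈ W` is a product of `n` elements of `T`. -/
def HasLen (T : Set W) (g : W) (n : ℕ) : Prop :=
  ∃ l : List W, (∀ x ∈ l, x ∈ T) ∧ l.prod = g ∧ l.length = n

/-- `u` has minimal word length (w.r.t. the generating set `T`) in the coset `u·H`. -/
def MinimalInCoset (T : Set W) (H : Subgroup W) (u : W) : Prop :=
  ∀ h ∈ H, ∀ m, HasLen T (u * h) m → ∃ n ≤ m, HasLen T u n

/-!
Put `𝒯 = 𝒳 \ 𝒳'` and `𝒱 = 𝒳 ∩ 𝒳'`. A reflection determines its root up to sign, so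
`R_𝒳 = R_𝒳'` forces `-𝒯 ⊆ 𝒳'`. Distinct roots of an AP set pair non-positively, so for
`τ ∈ 𝒯` and `γ ∈ 𝒱` both `⟨τ, γ⟩ ≤ 0` and `⟨-τ, γ⟩ ≤ 0`; hence `𝒯 ⊥ 𝒱` and `W_𝒯` fixes `𝒱`
pointwise. Therefore `w₀` maps `𝒳 = 𝒯 ⊔ 𝒱` onto `𝒳' = (-𝒯) ⊔ 𝒱`, and `w₀(o_𝒳)` is a point of
`span 𝒳'` pairing to `1` with all of `𝒳'`, as is `o_𝒳'`. Such a point is unique because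
`W_𝒳'` is finite: averaging any positive definite form over `W_𝒳'` gives an invariant one for
which every `r_γ`, `γ ∈ 𝒳'`, is an orthogonal reflection, so a vector of `span 𝒳'` that is
`⟨·,·⟩`-orthogonal to `𝒳'` is orthogonal to `span 𝒳'`, hence to itself, for the averaged form.
-/

section BasisForm

variable {ι V : Type*} [DecidableEq ι] [AddCommGroup V] [Module ℝ V]

lemma Module.Basis.toDual_self_eq_sum (b : Module.Basis ι ℝ V) (x : V) :
    b.toDual x x = (b.repr x).sum fun _ c => c * c := by
  nth_rewrite 2 [← b.linearCombination_repr x]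
  rw [Finsupp.linearCombination_apply, map_finsuppSum]
  simp only [map_smul, smul_eq_mul, Module.Basis.toDual_apply_left]
  rfl

lemma Module.Basis.toDual_self_nonneg (b : Module.Basis ι ℝ V) (x : V) : 0 ≤ b.toDual x x := by
  rw [b.toDual_self_eq_sum]
  exact Finset.sum_nonneg fun _ _ => mul_self_nonneg _

lemma Module.Basis.eq_zero_of_toDual_self_eq_zero (b : Module.Basis ι ℝ V) {x : V}
    (h : b.toDual x x = 0) : x = 0 := by
  rw [b.toDual_self_eq_sum, Finsupp.sum,
    Finset.sum_eq_zero_iff_of_nonneg fun _ _ => mul_self_nonneg _] at h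
  have hsupp : (b.repr x).support = ∅ := Finset.eq_empty_of_forall_notMem fun i hi =>
    Finsupp.mem_support_iff.mp hi (mul_self_eq_zero.mp (h i hi))
  simpa using hsupp

end BasisForm

theorem eq_zero_of_mem_span_of_forall_negated_by_stabilizer {G V : Type*} [Group G] [Finite G]
    [AddCommGroup V] [Module ℝ V] (ρ : G →* (V ≃ₗ[ℝ] V)) {X : Set V} {d : V}
    (hd : d ∈ Submodule.span ℝ X) (hX : ∀ γ ∈ X, ∃ g, ρ g γ = -γ ∧ ρ g d = d) : d = 0 := by
  classical
  have := Fintype.ofFinite G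
  let b := Module.Free.chooseBasis ℝ V
  -- a `G`-invariant positive definite form
  let B : V →ₗ[ℝ] V →ₗ[ℝ] ℝ := ∑ g, b.toDual.compl₁₂ (ρ g : V →ₗ[ℝ] V) (ρ g : V →ₗ[ℝ] V)
  have hB : ∀ x y, B x y = ∑ g, b.toDual (ρ g x) (ρ g y) := by
    simp [B, LinearMap.sum_apply]
  have hB_inv : ∀ h x y, B (ρ h x) (ρ h y) = B x y := by
    intro h x y
    simp only [hB, ← LinearEquiv.mul_apply, ← map_mul]
    exact Fintype.sum_equiv (Equiv.mulRight h) _ _ fun _ => rfl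
  have hBX : ∀ γ ∈ X, B γ d = 0 := by
    intro γ hγ
    obtain ⟨g, hgγ, hgd⟩ := hX γ hγ
    have := hB_inv g γ d
    rw [hgγ, hgd, map_neg, LinearMap.neg_apply] at this
    linarith
  have hBd : B d d = 0 := by
    have : Submodule.span ℝ X ≤ LinearMap.ker (B.flip d) :=
      Submodule.span_le.mpr fun γ hγ => hBX γ hγ
    exact this hd
  rw [hB, Finset.sum_eq_zero_iff_of_nonneg fun g _ => b.toDual_self_nonneg _] at hBd
  exact b.eq_zero_of_toDual_self_eq_zero (by simpa using hBd 1 (Finset.mem_univ 1))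

lemma eq_zero_of_mem_of_neg_mem {V : Type*} [AddCommGroup V] [Module ℝ V] {X : Set V}
    (hX : LinearIndependent ℝ ((↑) : X → V)) {γ : V} (hγ : γ ∈ X) (hneg : -γ ∈ X) : γ = 0 := by
  by_contra h0
  have hne : γ ≠ -γ := fun h => h0 <| by
    have h2 : (2 : ℝ) • γ = 0 := by rw [two_smul]; nth_rewrite 2 [h]; exact add_neg_cancel γ
    simpa using h2
  have hpair : LinearIndepOn ℝ id {γ, -γ} :=
    (show LinearIndepOn ℝ id X from hX).mono
      (Set.insert_subset hγ (Set.singleton_subset_iff.mpr hneg))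
  simpa using ((LinearIndepOn.pair_iff id hne).mp hpair 1 1 (by simp)).1

section CanonicalForm

variable (M : CoxeterMatrix S)

lemma bform_simpleRoot (s t : S) : bform M (simpleRoot s) (simpleRoot t) = formEntry M s t := by
  change bform M (Finsupp.basisSingleOne s) (Finsupp.basisSingleOne t) = _
  rw [bform, Module.Basis.constr_basis, Module.Basis.constr_basis]

lemma formEntry_self (s : S) : formEntry M s s = 1 := by
  simp [formEntry]

lemma formEntry_nonpos {s t : S} (h : s ≠ t) : formEntry M s t ≤ 0 := by
  unfold formEntry
  split_ifs with h0
  · norm_num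
  · have hm : (2 : ℝ) ≤ M s t := by
      have := M.off_diagonal s t h
      exact_mod_cast (show 2 ≤ M s t by omega)
    have hle : Real.pi / M s t ≤ Real.pi / 2 :=
      div_le_div_of_nonneg_left Real.pi_pos.le two_pos hm
    have hnonneg : 0 ≤ Real.pi / M s t := div_nonneg Real.pi_pos.le (zero_le_two.trans hm)
    have := Real.cos_nonneg_of_mem_Icc ⟨by linarith [Real.pi_pos], hle⟩
    linarith

lemma bform_flip : (bform M).flip = bform M :=
  LinearMap.ext_basis Finsupp.basisSingleOne Finsupp.basisSingleOne fun s t => by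
    change bform M (simpleRoot t) (simpleRoot s) = bform M (simpleRoot s) (simpleRoot t)
    simp only [bform_simpleRoot, formEntry, M.symmetric s t]

lemma bform_comm (x y : S →₀ ℝ) : bform M x y = bform M y x :=
  LinearMap.congr_fun₂ (bform_flip M) y x

end CanonicalForm

def PreservesForm (M : CoxeterMatrix S) (ρ : W →* ((S →₀ ℝ) ≃ₗ[ℝ] (S →₀ ℝ))) : Prop :=
  ∀ (w : W) (x y : S →₀ ℝ), bform M (ρ w x) (ρ w y) = bform M x y

def ActsByReflections (M : CoxeterMatrix S) (ρ : W →* ((S →₀ ℝ) ≃ₗ[ℝ] (S →₀ ℝ)))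
    (r : (S →₀ ℝ) → W) : Prop :=
  ∀ β ∈ rootSystem ρ, ∀ v, ρ (r β) v = v - (2 * bform M β v) • β

section RootSystem

variable {M : CoxeterMatrix S} {ρ : W →* ((S →₀ ℝ) ≃ₗ[ℝ] (S →₀ ℝ))} {r : (S →₀ ℝ) → W}

lemma actsByReflections_of_conj_simple (cs : CoxeterSystem M W)
    (hρ : ∀ (s : S) (v : S →₀ ℝ),
      ρ (cs.simple s) v = v - (2 * bform M (simpleRoot s) v) • simpleRoot s)
    (hρform : PreservesForm M ρ)
    (hr : ∀ (w : W) (s : S), r (ρ w (simpleRoot s)) = w * cs.simple s * w⁻¹) :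
    ActsByReflections M ρ r := by
  rintro _ ⟨⟨w, s⟩, rfl⟩ v
  have hw : ρ w (ρ w⁻¹ v) = v := by
    rw [← LinearEquiv.mul_apply, ← map_mul, mul_inv_cancel, map_one]
    rfl
  rw [hr, map_mul, map_mul, LinearEquiv.mul_apply, LinearEquiv.mul_apply, hρ, map_sub, map_smul,
    hw, ← hρform w, hw]

lemma bform_self_of_mem_rootSystem (hρform : PreservesForm M ρ) {β : S →₀ ℝ}
    (hβ : β ∈ rootSystem ρ) : bform M β β = 1 := by
  obtain ⟨⟨w, s⟩, rfl⟩ := hβ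
  rw [hρform, bform_simpleRoot, formEntry_self]

lemma ne_zero_of_mem_rootSystem (hρform : PreservesForm M ρ) {β : S →₀ ℝ}
    (hβ : β ∈ rootSystem ρ) : β ≠ 0 := by
  rintro rfl
  simpa using bform_self_of_mem_rootSystem hρform hβ

lemma ActsByReflections.apply_self (hrefl : ActsByReflections M ρ r) (hρform : PreservesForm M ρ)
    {β : S →₀ ℝ} (hβ : β ∈ rootSystem ρ) : ρ (r β) β = -β := by
  rw [hrefl β hβ, bform_self_of_mem_rootSystem hρform hβ]
  module

lemma ActsByReflections.apply_of_bform_eq_zero (hrefl : ActsByReflections M ρ r)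
    {β v : S →₀ ℝ} (hβ : β ∈ rootSystem ρ) (h : bform M β v = 0) : ρ (r β) v = v := by
  simp [hrefl β hβ, h]

lemma ActsByReflections.eq_or_eq_neg_of_eq (hrefl : ActsByReflections M ρ r)
    (hρform : PreservesForm M ρ) {β γ : S →₀ ℝ} (hβ : β ∈ rootSystem ρ)
    (hγ : γ ∈ rootSystem ρ) (h : r β = r γ) :
    β = γ ∨ β = -γ := by
  set c := bform M γ β
  have hβγ : β = c • γ := by
    have hneg := hrefl.apply_self hρform hβ
    rw [h, hrefl γ hγ] at hneg
    linear_combination (norm := module) (1 / 2 : ℝ) • hneg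
  have hc : c * c = 1 := by
    have hβ1 := bform_self_of_mem_rootSystem hρform hβ
    rw [hβγ, map_smul, map_smul, LinearMap.smul_apply,
      bform_self_of_mem_rootSystem hρform hγ] at hβ1
    simpa using hβ1
  rcases mul_self_eq_one_iff.mp hc with hc | hc
  · left; rw [hβγ, hc, one_smul]
  · right; rw [hβγ, hc, neg_one_smul]

end RootSystem

section AlmostParabolic

variable {M : CoxeterMatrix S} {ρ : W →* ((S →₀ ℝ) ≃ₗ[ℝ] (S →₀ ℝ))} {r : (S →₀ ℝ) → W}
  {𝒳 𝒳' : Set (S →₀ ℝ)}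

lemma IsAP.bform_nonpos (hρform : PreservesForm M ρ) (h𝒳 : IsAP ρ 𝒳) {β γ : S →₀ ℝ}
    (hβ : β ∈ 𝒳) (hγ : γ ∈ 𝒳) (hne : β ≠ γ) :
    bform M β γ ≤ 0 := by
  obtain ⟨w, s, t, rfl, rfl⟩ := h𝒳.2 β hβ γ hγ
  rw [hρform, bform_simpleRoot]
  exact formEntry_nonpos M fun hst => hne (by rw [hst])

lemma IsAP.neg_notMem (hρform : PreservesForm M ρ) (h𝒳 : IsAP ρ 𝒳) (h𝒳Φ : 𝒳 ⊆ rootSystem ρ)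
    {γ : S →₀ ℝ} (hγ : γ ∈ 𝒳) : -γ ∉ 𝒳 :=
  fun hneg => ne_zero_of_mem_rootSystem hρform (h𝒳Φ hγ) (eq_zero_of_mem_of_neg_mem h𝒳.1 hγ hneg)

lemma ActsByReflections.neg_mem_of_mem_diff (hrefl : ActsByReflections M ρ r)
    (hρform : PreservesForm M ρ) (h𝒳Φ : 𝒳 ⊆ rootSystem ρ) (h𝒳'Φ : 𝒳' ⊆ rootSystem ρ)
    (hR : r '' 𝒳 = r '' 𝒳')
    {β : S →₀ ℝ} (hβ : β ∈ 𝒳 \ 𝒳') : -β ∈ 𝒳' := by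
  obtain ⟨γ, hγ, hrγ⟩ : r β ∈ r '' 𝒳' := hR ▸ ⟨β, hβ.1, rfl⟩
  rcases hrefl.eq_or_eq_neg_of_eq hρform (h𝒳Φ hβ.1) (h𝒳'Φ hγ) hrγ.symm with rfl | rfl
  · exact absurd hγ hβ.2
  · rwa [neg_neg]

lemma ActsByReflections.bform_eq_zero_of_mem_diff_of_mem_inter
    (hrefl : ActsByReflections M ρ r) (hρform : PreservesForm M ρ)
    (h𝒳Φ : 𝒳 ⊆ rootSystem ρ) (h𝒳'Φ : 𝒳' ⊆ rootSystem ρ) (h𝒳 : IsAP ρ 𝒳) (h𝒳' : IsAP ρ 𝒳')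
    (hR : r '' 𝒳 = r '' 𝒳') {τ γ : S →₀ ℝ} (hτ : τ ∈ 𝒳 \ 𝒳') (hγ : γ ∈ 𝒳 ∩ 𝒳') :
    bform M τ γ = 0 := by
  have hτ' : -τ ∈ 𝒳' := hrefl.neg_mem_of_mem_diff hρform h𝒳Φ h𝒳'Φ hR hτ
  have hle := h𝒳.bform_nonpos hρform hτ.1 hγ.1 (by rintro rfl; exact hτ.2 hγ.2)
  have hle' := h𝒳'.bform_nonpos hρform hτ' hγ.2 (by
    rintro rfl; exact h𝒳.neg_notMem hρform h𝒳Φ hτ.1 hγ.1)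
  rw [map_neg, LinearMap.neg_apply] at hle'
  linarith

lemma ActsByReflections.apply_eq_self_of_mem_closure (hrefl : ActsByReflections M ρ r)
    (hρform : PreservesForm M ρ) (h𝒳Φ : 𝒳 ⊆ rootSystem ρ) (h𝒳'Φ : 𝒳' ⊆ rootSystem ρ)
    (h𝒳 : IsAP ρ 𝒳) (h𝒳' : IsAP ρ 𝒳')
    (hR : r '' 𝒳 = r '' 𝒳') {w : W} (hw : w ∈ Subgroup.closure (r '' (𝒳 \ 𝒳')))
    {γ : S →₀ ℝ} (hγ : γ ∈ 𝒳 ∩ 𝒳') : ρ w γ = γ := by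
  have hle : Subgroup.closure (r '' (𝒳 \ 𝒳')) ≤
      (MulAction.stabilizer ((S →₀ ℝ) ≃ₗ[ℝ] (S →₀ ℝ)) γ).comap ρ := by
    rw [Subgroup.closure_le]
    rintro _ ⟨τ, hτ, rfl⟩
    exact hrefl.apply_of_bform_eq_zero (h𝒳Φ hτ.1)
      (hrefl.bform_eq_zero_of_mem_diff_of_mem_inter hρform h𝒳Φ h𝒳'Φ h𝒳 h𝒳' hR hτ hγ)
  exact hle hw

lemma ActsByReflections.image_eq_of_image_diff_eq_neg (hrefl : ActsByReflections M ρ r)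
    (hρform : PreservesForm M ρ) (h𝒳Φ : 𝒳 ⊆ rootSystem ρ) (h𝒳'Φ : 𝒳' ⊆ rootSystem ρ)
    (h𝒳 : IsAP ρ 𝒳) (h𝒳' : IsAP ρ 𝒳')
    (hR : r '' 𝒳 = r '' 𝒳') {w₀ : W} (hw₀mem : w₀ ∈ Subgroup.closure (r '' (𝒳 \ 𝒳')))
    (hw₀T : ⇑(ρ w₀) '' (𝒳 \ 𝒳') = (fun v : S →₀ ℝ => -v) '' (𝒳 \ 𝒳')) :
    ρ w₀ '' 𝒳 = 𝒳' := by
  have hfix : ∀ {γ}, γ ∈ 𝒳 ∩ 𝒳' → ρ w₀ γ = γ :=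
    hrefl.apply_eq_self_of_mem_closure hρform h𝒳Φ h𝒳'Φ h𝒳 h𝒳' hR hw₀mem
  apply subset_antisymm
  · rintro _ ⟨β, hβ, rfl⟩
    by_cases hβ' : β ∈ 𝒳'
    · rwa [hfix ⟨hβ, hβ'⟩]
    · obtain ⟨τ, hτ, hτβ⟩ : ρ w₀ β ∈ (fun v => -v) '' (𝒳 \ 𝒳') := hw₀T ▸ ⟨β, ⟨hβ, hβ'⟩, rfl⟩
      rw [← hτβ]
      exact hrefl.neg_mem_of_mem_diff hρform h𝒳Φ h𝒳'Φ hR hτ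
  · intro γ hγ
    by_cases hγ𝒳 : γ ∈ 𝒳
    · exact ⟨γ, hγ𝒳, hfix ⟨hγ𝒳, hγ⟩⟩
    · have hnegγ : -γ ∈ 𝒳 \ 𝒳' :=
        ⟨hrefl.neg_mem_of_mem_diff hρform h𝒳'Φ h𝒳Φ hR.symm ⟨hγ, hγ𝒳⟩,
          h𝒳'.neg_notMem hρform h𝒳'Φ hγ⟩
      obtain ⟨τ, hτ, hτγ⟩ : γ ∈ ρ w₀ '' (𝒳 \ 𝒳') := hw₀T ▸ ⟨-γ, hnegγ, neg_neg γ⟩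
      exact ⟨τ, hτ.1, hτγ⟩

lemma ActsByReflections.eq_of_mem_span_of_forall_bform_eq (hrefl : ActsByReflections M ρ r)
    (hρform : PreservesForm M ρ) (h𝒳Φ : 𝒳 ⊆ rootSystem ρ)
    (hfin : (Subgroup.closure (r '' 𝒳) : Set W).Finite)
    {o o' : S →₀ ℝ} (ho : o ∈ Submodule.span ℝ 𝒳) (ho' : o' ∈ Submodule.span ℝ 𝒳)
    (h : ∀ γ ∈ 𝒳, bform M o γ = bform M o' γ) : o = o' := by
  have := hfin.to_subtype
  rw [← sub_eq_zero]
  refine eq_zero_of_mem_span_of_forall_negated_by_stabilizer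
    (ρ.comp (Subgroup.closure (r '' 𝒳)).subtype) (sub_mem ho ho') fun γ hγ =>
      ⟨⟨r γ, Subgroup.subset_closure ⟨γ, hγ, rfl⟩⟩, hrefl.apply_self hρform (h𝒳Φ hγ),
        hrefl.apply_of_bform_eq_zero (h𝒳Φ hγ) ?_⟩
  rw [bform_comm, map_sub, LinearMap.sub_apply, h γ hγ, sub_self]

end AlmostParabolic

theorem statement8_general
    (M : CoxeterMatrix S) (cs : CoxeterSystem M W)
    (ρ : W →* ((S →₀ ℝ) ≃ₗ[ℝ] (S →₀ ℝ)))
    (hρ : ∀ (s : S) (v : S →₀ ℝ),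
      ρ (cs.simple s) v = v - (2 * bform M (simpleRoot s) v) • simpleRoot s)
    (hρform : ∀ (w : W) (x y : S →₀ ℝ), bform M (ρ w x) (ρ w y) = bform M x y)
    (r : (S →₀ ℝ) → W)
    (hr : ∀ (w : W) (s : S), r (ρ w (simpleRoot s)) = w * cs.simple s * w⁻¹)
    (𝒳 𝒳' : Set (S →₀ ℝ)) (h𝒳Φ : 𝒳 ⊆ rootSystem ρ) (h𝒳'Φ : 𝒳' ⊆ rootSystem ρ)
    (hAP : IsAP ρ 𝒳) (hAP' : IsAP ρ 𝒳')
    (hsph' : ((Subgroup.closure (r '' 𝒳') : Set W)).Finite)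
    (hR : r '' 𝒳 = r '' 𝒳')
    (w₀ : W) (hw₀mem : w₀ ∈ Subgroup.closure (r '' (𝒳 \ 𝒳')))
    (hw₀T : ⇑(ρ w₀) '' (𝒳 \ 𝒳') = (fun v : S →₀ ℝ => -v) '' (𝒳 \ 𝒳'))
    (o𝒳 : S →₀ ℝ) (ho𝒳span : o𝒳 ∈ Submodule.span ℝ 𝒳)
    (ho𝒳 : ∀ γ ∈ 𝒳, bform M o𝒳 γ = 1)
    (o𝒳' : S →₀ ℝ) (ho𝒳'span : o𝒳' ∈ Submodule.span ℝ 𝒳')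
    (ho𝒳' : ∀ γ ∈ 𝒳', bform M o𝒳' γ = 1) :
    ρ w₀ o𝒳 = o𝒳' := by
  have hrefl := actsByReflections_of_conj_simple cs hρ hρform hr
  have himage : ρ w₀ '' 𝒳 = 𝒳' :=
    hrefl.image_eq_of_image_diff_eq_neg hρform h𝒳Φ h𝒳'Φ hAP hAP' hR hw₀mem hw₀T
  refine hrefl.eq_of_mem_span_of_forall_bform_eq hρform h𝒳'Φ hsph' ?_ ho𝒳'span fun γ hγ => ?_
  · rw [← himage]
    exact Submodule.apply_mem_span_image_of_mem_span (ρ w₀ : (S →₀ ℝ) →ₗ[ℝ] (S →₀ ℝ)) ho𝒳span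
  · rw [ho𝒳' γ hγ]
    obtain ⟨β, hβ, rfl⟩ := himage ▸ hγ
    rw [hρform, ho𝒳 β hβ]

/-- Let `𝒳, 𝒳' ⊆ Φ` be AP of spherical type with `R_𝒳 = R_𝒳'`, and set
`𝒯 = 𝒳 ∖ 𝒳'` (so `𝒳 = 𝒯 ⊔ 𝒱` and `𝒳' = (−𝒯) ⊔ 𝒱` with `𝒱 = 𝒳 ∩ 𝒳'`).  Let `w₀ ∈ W_𝒯`
satisfy `w₀(𝒯) = −𝒯` (e.g. the longest element of the finite Coxeter group `W_𝒯`).  Then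
`w₀ (o_𝒳) = o_𝒳'`.  (The points `o_𝒳`, `o_𝒳'` are characterized as the unique vectors of
the respective spans pairing to `1` with every root of `𝒳`, resp. `𝒳'`.) -/
theorem statement8
    (M : CoxeterMatrix S) (cs : CoxeterSystem M W)
    (ρ : W →* ((S →₀ ℝ) ≃ₗ[ℝ] (S →₀ ℝ)))
    (hρ : ∀ (s : S) (v : S →₀ ℝ),
      ρ (cs.simple s) v = v - (2 * bform M (simpleRoot s) v) • simpleRoot s)
    (hρinj : Function.Injective ρ)
    (hρform : ∀ (w : W) (x y : S →₀ ℝ), bform M (ρ w x) (ρ w y) = bform M x y)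
    (r : (S →₀ ℝ) → W)
    (hr : ∀ (w : W) (s : S), r (ρ w (simpleRoot s)) = w * cs.simple s * w⁻¹)
    (𝒳 𝒳' : Set (S →₀ ℝ)) (h𝒳Φ : 𝒳 ⊆ rootSystem ρ) (h𝒳'Φ : 𝒳' ⊆ rootSystem ρ)
    (hAP : IsAP ρ 𝒳) (hAP' : IsAP ρ 𝒳')
    (hsph : ((Subgroup.closure (r '' 𝒳) : Set W)).Finite)
    (hsph' : ((Subgroup.closure (r '' 𝒳') : Set W)).Finite)
    (hR : r '' 𝒳 = r '' 𝒳')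
    (w₀ : W) (hw₀mem : w₀ ∈ Subgroup.closure (r '' (𝒳 \ 𝒳')))
    (hw₀T : ⇑(ρ w₀) '' (𝒳 \ 𝒳') = (fun v : S →₀ ℝ => -v) '' (𝒳 \ 𝒳'))
    (o𝒳 : S →₀ ℝ) (ho𝒳span : o𝒳 ∈ Submodule.span ℝ 𝒳)
    (ho𝒳 : ∀ γ ∈ 𝒳, bform M o𝒳 γ = 1)
    (o𝒳' : S →₀ ℝ) (ho𝒳'span : o𝒳' ∈ Submodule.span ℝ 𝒳')
    (ho𝒳' : ∀ γ ∈ 𝒳', bform M o𝒳' γ = 1) :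
    ρ w₀ o𝒳 = o𝒳' :=
  statement8_general M cs ρ hρ hρform r hr 𝒳 𝒳' h𝒳Φ h𝒳'Φ hAP hAP' hsph' hR w₀ hw₀mem hw₀T o𝒳 ho𝒳span
    ho𝒳 o𝒳' ho𝒳'span ho𝒳'
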